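/- Let G be a finite subgroup of SO(3) and let x be a nonzero vector in ℝ³. Then the stabilizer of x in G, i.e. the subgroup { g ∈ G : g • x = x }, is a cyclic group. -/

import Mathlib

/-!
An element of `SO(3)` fixing `x` fixes every multiple of `x`, and some multiple of `x` is the
image of `e₀ = (1, 0, 0)` under a rotation. So, after conjugating, the stabilizer of `x`
becomes a group of rotations fixing `e₀`, that is, of matrices `diag(1, R)` with
`R = [[a, -b], [b, a]]` a plane rotation. Sending `R` to `a + b i` embeds the stabilizer in
`ℂˣ`, and every finite subgroup of the units of a field is cyclic.
-/

def SO3 : Subgroup (Matrix.orthogonalGroup (Fin 3) ℝ) where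
  carrier := {A | ((A : Matrix (Fin 3) (Fin 3) ℝ)).det = 1}
  one_mem' := by simp
  mul_mem' := by
    intro a b ha hb
    simp only [Set.mem_setOf_eq, Matrix.UnitaryGroup.mul_val, Matrix.det_mul] at *
    rw [ha, hb, mul_one]
  inv_mem' := by
    intro a ha
    simp only [Set.mem_setOf_eq, Matrix.UnitaryGroup.inv_val, Matrix.star_eq_conjTranspose,
      Matrix.det_conjTranspose, star_trivial] at *
    exact ha

noncomputable instance : MulAction (Matrix.orthogonalGroup (Fin 3) ℝ) (EuclideanSpace ℝ (Fin 3)) where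
  smul A v := WithLp.toLp 2 (Matrix.mulVec (A : Matrix (Fin 3) (Fin 3) ℝ) v)
  one_smul v := by
    change WithLp.toLp 2 (Matrix.mulVec (1 : Matrix (Fin 3) (Fin 3) ℝ) v) = v
    rw [Matrix.one_mulVec]
  mul_smul A B v := by
    change WithLp.toLp 2 (Matrix.mulVec ((A : Matrix (Fin 3) (Fin 3) ℝ) * (B : Matrix (Fin 3) (Fin 3) ℝ)) v) = _
    rw [← Matrix.mulVec_mulVec]; rfl

open Matrix

local notation "ℝ³" => EuclideanSpace ℝ (Fin 3)

namespace Matrix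

def rotationX (z : ℂ) : Matrix (Fin 3) (Fin 3) ℝ :=
  !![1, 0, 0; 0, z.re, -z.im; 0, z.im, z.re]

theorem rotationX_mul (z w : ℂ) : rotationX z * rotationX w = rotationX (z * w) := by
  ext i j
  fin_cases i <;> fin_cases j <;> simp [rotationX, Matrix.mul_apply, Fin.sum_univ_three] <;> ring

theorem rotationX_injective : Function.Injective rotationX := fun z w h =>
  Complex.ext (by simpa [rotationX] using congrFun (congrFun h 1) 1)
    (by simpa [rotationX] using congrFun (congrFun h 2) 1)

theorem eq_rotationX_of_mulVec_single_zero {A : Matrix (Fin 3) (Fin 3) ℝ} (hA : Aᵀ * A = 1)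
    (hdet : A.det = 1) (hfix : A *ᵥ Pi.single 0 1 = Pi.single 0 1) :
    A = rotationX ⟨A 1 1, A 2 1⟩ := by
  have hcol : ∀ i, A i 0 = (1 : Matrix (Fin 3) (Fin 3) ℝ) i 0 := fun i => by
    simpa [mulVec_single, Pi.single_apply, one_apply] using congrFun hfix i
  have hrow : ∀ j, A 0 j = (1 : Matrix (Fin 3) (Fin 3) ℝ) 0 j := fun j => by
    simpa [Matrix.mul_apply, Fin.sum_univ_three, hcol] using congrFun (congrFun hA 0) j
  have hblock : A 1 2 = -A 2 1 ∧ A 2 2 = A 1 1 := by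
    have h11 := congrFun (congrFun hA 1) 1
    have h12 := congrFun (congrFun hA 1) 2
    simp only [Matrix.mul_apply, Fin.sum_univ_three, transpose_apply] at h11 h12
    rw [det_fin_three] at hdet
    simp only [Fin.isValue, hrow, hcol, ne_eq, zero_ne_one, one_ne_zero, not_false_eq_true,
      one_apply_ne, one_apply_eq, Fin.reduceEq, mul_zero, zero_mul, one_mul, zero_add, add_zero,
      sub_zero] at h11 h12 hdet
    constructor
    · linear_combination -(A 2 1) * hdet + A 1 1 * h12 - A 1 2 * h11
    · linear_combination A 1 1 * hdet + A 2 1 * h12 - A 2 2 * h11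
  ext i j
  fin_cases i <;> fin_cases j <;> simp [rotationX, hrow, hcol, hblock]

end Matrix

instance : SMulCommClass (Matrix.orthogonalGroup (Fin 3) ℝ) ℝ ℝ³ where
  smul_comm g c v :=
    congrArg (WithLp.toLp 2) (mulVec_smul (g : Matrix (Fin 3) (Fin 3) ℝ) c (WithLp.ofLp v))

namespace SO3

theorem transpose_mul_self (g : SO3) :
    (g : Matrix (Fin 3) (Fin 3) ℝ)ᵀ * g = 1 := by
  simpa [star_eq_conjTranspose] using
    (Unitary.mem_iff.mp (g : Matrix.orthogonalGroup (Fin 3) ℝ).2).1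

theorem stabilizer_smul_eq {c : ℝ} (hc : c ≠ 0) (v : ℝ³) :
    MulAction.stabilizer SO3 (c • v) = MulAction.stabilizer SO3 v := by
  ext g
  rw [MulAction.mem_stabilizer_iff, MulAction.mem_stabilizer_iff]
  exact (Eq.congr_left (smul_comm (g : Matrix.orthogonalGroup (Fin 3) ℝ) c v)).trans
    (smul_right_inj hc)

theorem coe_eq_rotationX (g : MulAction.stabilizer SO3 (EuclideanSpace.single 0 1 : ℝ³)) :
    (g : Matrix (Fin 3) (Fin 3) ℝ) =
      rotationX ⟨(g : Matrix (Fin 3) (Fin 3) ℝ) 1 1, (g : Matrix (Fin 3) (Fin 3) ℝ) 2 1⟩ :=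
  eq_rotationX_of_mulVec_single_zero (transpose_mul_self g) (g : SO3).2
    (congrArg WithLp.ofLp g.2)

noncomputable def stabilizerSingleToComplex :
    MulAction.stabilizer SO3 (EuclideanSpace.single 0 1 : ℝ³) →* ℂ where
  toFun g := ⟨(g : Matrix (Fin 3) (Fin 3) ℝ) 1 1, (g : Matrix (Fin 3) (Fin 3) ℝ) 2 1⟩
  map_one' := Complex.ext (by simp) (by simp)
  map_mul' g h := rotationX_injective <| by
    rw [← rotationX_mul, ← coe_eq_rotationX, ← coe_eq_rotationX, ← coe_eq_rotationX]
    rfl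

theorem stabilizerSingleToComplex_injective : Function.Injective stabilizerSingleToComplex :=
  fun g h hgh => Subtype.val_injective <| Subtype.val_injective <| Subtype.val_injective <| by
    rw [coe_eq_rotationX g, coe_eq_rotationX h]
    exact congrArg rotationX hgh

theorem exists_smul_mem_orbit_single {x : ℝ³} (hx : x ≠ 0) :
    ∃ c : ℝ, c ≠ 0 ∧
      c • x ∈ MulAction.orbit SO3 (EuclideanSpace.single 0 1 : ℝ³) := by
  have hu : Orthonormal ℝ (({0} : Set (Fin 3)).domRestrict fun _ => ‖x‖⁻¹ • x) :=
    orthonormal_subsingleton_iff.mpr fun _ => norm_smul_inv_norm hx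
  obtain ⟨b, hb⟩ := hu.exists_orthonormalBasis_extension_of_card_eq (by simp)
  let e := EuclideanSpace.basisFun (Fin 3) ℝ
  let b' := b.adjustToOrientation e.toBasis.orientation
  have hdet : (e.toBasis.toMatrix b').det = 1 := by
    rw [← Module.Basis.det_apply]
    exact e.det_to_matrix_orthonormalBasis_of_same_orientation b'
      (b.orientation_adjustToOrientation _).symm
  let Q : SO3 :=
    ⟨⟨e.toBasis.toMatrix b', e.toMatrix_orthonormalBasis_mem_orthogonal b'⟩, hdet⟩
  -- This is `Q • e₀ = b' 0`; elaborating `Q • _` directly times out in instance search.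
  have hQ : WithLp.toLp 2 (e.toBasis.toMatrix b' *ᵥ Pi.single 0 1) = b' 0 := by
    ext i
    simp [mulVec_single, Module.Basis.toMatrix_apply, EuclideanSpace.basisFun_repr, e]
  have hnorm : ‖x‖⁻¹ ≠ 0 := inv_ne_zero (norm_ne_zero_iff.mpr hx)
  -- Fixing the orientation may have flipped the sign of `b 0`.
  rcases b.adjustToOrientation_apply_eq_or_eq_neg e.toBasis.orientation 0 with h | h
  · exact ⟨‖x‖⁻¹, hnorm, Q, hQ.trans (h.trans (hb 0 rfl))⟩
  · exact ⟨-‖x‖⁻¹, neg_ne_zero.mpr hnorm, Q, hQ.trans (by rw [h, hb 0 rfl, neg_smul])⟩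

theorem exists_injective_monoidHom_stabilizer_complex {x : ℝ³} (hx : x ≠ 0) :
    ∃ f : MulAction.stabilizer SO3 x →* ℂ, Function.Injective f := by
  obtain ⟨c, hc, hcx⟩ := exists_smul_mem_orbit_single hx
  let e := (MulEquiv.subgroupCongr (stabilizer_smul_eq hc x).symm).trans
    (MulAction.stabilizerEquivStabilizerOfOrbitRel hcx)
  exact ⟨stabilizerSingleToComplex.comp e.toMonoidHom,
    stabilizerSingleToComplex_injective.comp e.injective⟩

end SO3

/-- The stabilizer of a nonzero vector `x ∈ ℝ³` in a finite subgroup `G` of `SO(3)`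
is a cyclic group. -/
theorem stabilizer_finite_subgroup_SO3_isCyclic
    (G : Subgroup SO3) [Finite G] (x : EuclideanSpace ℝ (Fin 3)) (hx : x ≠ 0) :
    IsCyclic (MulAction.stabilizer G x) := by
  obtain ⟨f, hf⟩ := SO3.exists_injective_monoidHom_stabilizer_complex hx
  let ι : MulAction.stabilizer G x →* MulAction.stabilizer SO3 x :=
    (G.subtype.comp (MulAction.stabilizer G x).subtype).codRestrict _ fun g => g.2
  have hι : Function.Injective ι := (MonoidHom.injective_codRestrict _ _ _).mpr
    (G.subtype_injective.comp (MulAction.stabilizer G x).subtype_injective)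
  exact isCyclic_of_injective_ringHom (f.comp ι) (hf.comp hι)
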